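/- arXiv:1605.01899 — 3 statements merged into one kernel-verified Lean document; each statement's English description precedes it below -/
import Mathlib

section
/- Let μ > −1, a > 0, and let m ≥ 0 be an integer. Then for every x > 0, ω_{μ+m,a}(x) = a^{−m} r_{m,μ}(a²x) ω_{μ,a}(x) + a^{1−m} s_{m,μ}(a²x) ω_{μ+1,a}(x). -/
open MeasureTheory Real Filter Set Finset

/-- Modified Bessel function of the first kind. -/
noncomputable def besselI (μ z : ℝ) : ℝ :=
  (z / 2) ^ μ * ∑' k : ℕ, (z ^ 2 / 4) ^ k / (Nat.factorial k * Real.Gamma (μ + k + 1))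

/-- Modified Bessel function of the second kind. -/
noncomputable def besselK (ν z : ℝ) : ℝ :=
  ∫ t in Set.Ioi (0 : ℝ), Real.exp (-z * Real.cosh t) * Real.cosh (ν * t)

/-- Scaled modified Bessel function of the first kind. -/
noncomputable def omegaW (μ a x : ℝ) : ℝ := x ^ (μ / 2) * besselI μ (2 * a * Real.sqrt x)

/-- Scaled modified Bessel function of the second kind. -/
noncomputable def rhoW (ν b x : ℝ) : ℝ := x ^ (ν / 2) * besselK ν (2 * b * Real.sqrt x)

/-- Pochhammer symbol (rising factorial) for a real argument. -/
noncomputable def poch (t : ℝ) (k : ℕ) : ℝ := ∏ i ∈ Finset.range k, (t + i)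

/-- Pochhammer symbol (rising factorial) for a complex argument. -/
noncomputable def cpoch (t : ℂ) (k : ℕ) : ℂ := ∏ i ∈ Finset.range k, (t + i)

/-- The polynomial `r_{m,μ}` built from Lommel polynomials. -/
noncomputable def rPoly (μ : ℝ) (m : ℕ) (x : ℝ) : ℝ :=
  if m = 0 then 1
  else (-1 : ℝ) ^ m * ∑ j ∈ Finset.range (m / 2),
    ((m - j - 2).choose j : ℝ) * poch (μ + j + 2) (m - 2 * j - 2) * x ^ (j + 1)

/-- The polynomial `s_{m,μ}` built from Lommel polynomials. -/
noncomputable def sPoly (μ : ℝ) (m : ℕ) (x : ℝ) : ℝ :=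
  if m = 0 then 0
  else (-1 : ℝ) ^ (m + 1) * ∑ j ∈ Finset.range ((m + 1) / 2),
    ((m - j - 1).choose j : ℝ) * poch (μ + j + 1) (m - 2 * j - 1) * x ^ j

/-- The linear form `Q_n^{μ,ν,a,b}`. -/
noncomputable def Qmop (μ ν a b : ℝ) (n : ℕ) (x : ℝ) : ℝ :=
  (-1 : ℝ) ^ n * ∑ j ∈ Finset.range (n + 1),
    (n.choose j : ℝ) * (Real.Gamma (μ + ν + 1 + n) / Real.Gamma (μ + ν + 1 + j)) *
      ((a ^ 2 - b ^ 2) / a) ^ j * omegaW (μ + j) a x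

/-- The dual linear form `P_n^{μ,ν,a,b}`. -/
noncomputable def Pmop (μ ν a b : ℝ) (n : ℕ) (x : ℝ) : ℝ :=
  (-1 : ℝ) ^ n * (2 * (b ^ 2 - a ^ 2) ^ (μ + ν + 1) / (a ^ μ * b ^ ν * Nat.factorial n)) *
    ∑ j ∈ Finset.range (n + 1),
      (n.choose j : ℝ) * ((a ^ 2 - b ^ 2) / b) ^ j * rhoW (ν + j) b x /
        Real.Gamma (μ + ν + 1 + j)

/-- Monic generalized Laguerre polynomial. -/
noncomputable def laguerreM (α : ℝ) (n : ℕ) (x : ℝ) : ℝ :=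
  (-1 : ℝ) ^ n * ∑ j ∈ Finset.range (n + 1),
    (n.choose j : ℝ) * (Real.Gamma (α + 1 + n) / Real.Gamma (α + 1 + j)) * (-x) ^ j

/-- `Q` with integer index, vanishing for negative index. -/
noncomputable def QmopZ (μ ν a b : ℝ) (m : ℤ) (x : ℝ) : ℝ :=
  if 0 ≤ m then Qmop μ ν a b m.toNat x else 0

/-- `P` with integer index, vanishing for negative index. -/
noncomputable def PmopZ (μ ν a b : ℝ) (m : ℤ) (x : ℝ) : ℝ :=
  if 0 ≤ m then Pmop μ ν a b m.toNat x else 0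

/-- `f` has a sign change at `x₀`: it takes both positive and negative values in
every neighborhood of `x₀`. -/
def SignChangeAt (f : ℝ → ℝ) (x₀ : ℝ) : Prop :=
  ∀ ε > 0, (∃ y, |y - x₀| < ε ∧ 0 < f y) ∧ (∃ y, |y - x₀| < ε ∧ f y < 0)

/-- Recurrence coefficient `a_{2,m}`. -/
noncomputable def coefA2 (μ ν a b m : ℝ) : ℝ := (a / (b ^ 2 - a ^ 2)) ^ 2

/-- Recurrence coefficient `a_{1,m}`. -/
noncomputable def coefA1 (μ ν a b m : ℝ) : ℝ :=
  2 * (μ + ν + 2 * m + 2) * (a / (b ^ 2 - a ^ 2)) ^ 2 + (μ + m + 1) / (b ^ 2 - a ^ 2)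

/-- Recurrence coefficient `a_{0,m}`. -/
noncomputable def coefA0 (μ ν a b m : ℝ) : ℝ :=
  (6 * m ^ 2 + 6 * (μ + ν + 1) * m + (μ + ν + 1) * (μ + ν + 2)) * (a / (b ^ 2 - a ^ 2)) ^ 2 +
    (3 * m ^ 2 + (4 * μ + 2 * ν + 3) * m + (μ + 1) * (μ + ν + 1)) / (b ^ 2 - a ^ 2)

/-- Recurrence coefficient `a_{-1,m}`. -/
noncomputable def coefAm1 (μ ν a b m : ℝ) : ℝ :=
  m * (μ + ν + m) * (2 * (μ + ν + 2) * (b / (b ^ 2 - a ^ 2)) ^ 2 - (ν + m) / (b ^ 2 - a ^ 2))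

/-- Recurrence coefficient `a_{-2,m}`. -/
noncomputable def coefAm2 (μ ν a b m : ℝ) : ℝ :=
  (m - 1) * m * (μ + ν + m - 1) * (μ + ν + m) * (b / (b ^ 2 - a ^ 2)) ^ 2

/-!
With `y = a² x` and `W m = a ^ m ω_{μ+m,a}(x)`, both sides of the expansion solve the recurrence
`W (m + 2) = y W m - (μ + m + 1) W (m + 1)`. For `ω` this comes from the power series
`ω_{ν,a}(x) = a^ν x^ν ∑ₖ (a² x)^k / (k! Γ(ν + k + 1))` and `(ν + k) / Γ(ν + k + 1) = 1 / Γ(ν + k)`,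
which give the contiguous relation `ω_{ν+1} = x ω_{ν-1} - (ν / a) ω_ν`. For the polynomials,
`r_{m+1,μ} = y s_{m,μ+1}`, and the recurrence for `s` is, coefficientwise, Pascal's rule combined
with the absorption identity `(n choose j+1) (j+1) = (n choose j) (n-j)`. Since `(r_m, s_m)`
starts at `(1, 0), (0, 1)`, the two sides agree for all `m`.
-/

lemma poch_succ (t : ℝ) (k : ℕ) : poch t (k + 1) = poch t k * (t + k) :=
  Finset.prod_range_succ _ _

lemma poch_succ' (t : ℝ) (k : ℕ) : poch t (k + 1) = t * poch (t + 1) k := by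
  rw [poch, Finset.prod_range_succ', mul_comm, poch]
  simp only [Nat.cast_zero, add_zero, Nat.cast_succ, add_assoc, add_comm (1 : ℝ)]

noncomputable def lommelCoeff (μ : ℝ) (n j : ℕ) : ℝ :=
  ((n - j).choose j : ℝ) * poch (μ + j + 1) (n - 2 * j)

lemma lommelCoeff_zero_right (μ : ℝ) (n : ℕ) : lommelCoeff μ n 0 = poch (μ + 1) n := by
  simp [lommelCoeff]

lemma lommelCoeff_of_lt (μ : ℝ) {n j : ℕ} (h : n < 2 * j) : lommelCoeff μ n j = 0 := by
  simp [lommelCoeff, Nat.choose_eq_zero_of_lt (show n - j < j by omega)]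

lemma lommelCoeff_two_mul_add (μ : ℝ) (j k : ℕ) :
    lommelCoeff μ (2 * j + k) j = (j + k).choose j * poch (μ + j + 1) k := by
  rw [lommelCoeff, show 2 * j + k - j = j + k by omega, show 2 * j + k - 2 * j = k by omega]

lemma lommelCoeff_add_two_succ (μ : ℝ) (n j : ℕ) :
    lommelCoeff μ (n + 2) (j + 1) =
      lommelCoeff μ n j + (μ + n + 2) * lommelCoeff μ (n + 1) (j + 1) := by
  rcases lt_or_ge n (2 * j) with h | h
  · rw [lommelCoeff_of_lt μ (by omega), lommelCoeff_of_lt μ h, lommelCoeff_of_lt μ (by omega)]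
    ring
  obtain ⟨k, rfl⟩ := Nat.exists_eq_add_of_le h
  rcases k with _ | k
  · rw [lommelCoeff_of_lt μ (show 2 * j + 0 + 1 < 2 * (j + 1) by omega),
      show 2 * j + 0 + 2 = 2 * (j + 1) + 0 by ring, lommelCoeff_two_mul_add,
      lommelCoeff_two_mul_add]
    simp [poch]
  have hpascal : (j + 1 + (k + 1)).choose (j + 1) =
      (j + k + 1).choose j + (j + 1 + k).choose (j + 1) := by
    rw [show j + 1 + (k + 1) = j + k + 1 + 1 by omega, Nat.choose_succ_succ',
      show j + 1 + k = j + k + 1 by omega]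
  have habsorb : (j + 1 + k).choose (j + 1) * (j + 1) = (j + k + 1).choose j * (k + 1) := by
    rw [show j + 1 + k = j + k + 1 by omega, Nat.choose_succ_right_eq,
      show j + k + 1 - j = k + 1 by omega]
  rw [show 2 * j + (k + 1) + 2 = 2 * (j + 1) + (k + 1) by ring,
    show 2 * j + (k + 1) + 1 = 2 * (j + 1) + k by ring, lommelCoeff_two_mul_add,
    lommelCoeff_two_mul_add, lommelCoeff_two_mul_add, poch_succ, poch_succ',
    show μ + j + 1 + 1 = μ + (j + 1 : ℕ) + 1 by push_cast; ring]
  have hpascal' := congrArg (Nat.cast (R := ℝ)) hpascal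
  have habsorb' := congrArg (Nat.cast (R := ℝ)) habsorb
  push_cast at hpascal' habsorb' ⊢
  linear_combination poch (μ + (j + 1) + 1) k * ((μ + j + k + 2) * hpascal' - habsorb')

lemma sPoly_succ_eq_sum (μ : ℝ) {n N : ℕ} (hN : n < 2 * N) (y : ℝ) :
    sPoly μ (n + 1) y = (-1) ^ n * ∑ j ∈ range N, lommelCoeff μ n j * y ^ j := by
  rw [sPoly, if_neg n.succ_ne_zero, show (-1 : ℝ) ^ (n + 1 + 1) = (-1) ^ n by ring,
    Finset.sum_subset (range_subset_range.2 (show (n + 1 + 1) / 2 ≤ N by omega))]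
  · refine congrArg _ (Finset.sum_congr rfl fun j _ => ?_)
    rw [lommelCoeff, show n + 1 - j - 1 = n - j by omega,
      show n + 1 - 2 * j - 1 = n - 2 * j by omega]
  · intro j _ hj
    rw [Finset.mem_range, not_lt] at hj
    rw [show n + 1 - j - 1 = n - j by omega, Nat.choose_eq_zero_of_lt (by omega)]
    simp

lemma lommelCoeff_add_two_zero (μ : ℝ) (n : ℕ) :
    lommelCoeff μ (n + 2) 0 = (μ + n + 2) * lommelCoeff μ (n + 1) 0 := by
  rw [lommelCoeff_zero_right, lommelCoeff_zero_right, poch_succ]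
  push_cast
  ring

lemma sPoly_add_two (μ : ℝ) (m : ℕ) (y : ℝ) :
    sPoly μ (m + 2) y = y * sPoly μ m y - (μ + m + 1) * sPoly μ (m + 1) y := by
  rcases m with _ | n
  · norm_num [sPoly, poch, add_comm]
  have hshift : ∑ j ∈ range (n + 2), lommelCoeff μ (n + 2) (j + 1) * y ^ (j + 1) =
      y * ∑ j ∈ range (n + 2), lommelCoeff μ n j * y ^ j +
        (μ + n + 2) * ∑ j ∈ range (n + 2), lommelCoeff μ (n + 1) (j + 1) * y ^ (j + 1) := by
    rw [mul_sum, mul_sum, ← sum_add_distrib]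
    refine Finset.sum_congr rfl fun j _ => ?_
    rw [lommelCoeff_add_two_succ]
    ring
  rw [sPoly_succ_eq_sum μ (show n + 2 < 2 * (n + 3) by omega),
    sPoly_succ_eq_sum μ (show n < 2 * (n + 2) by omega),
    sPoly_succ_eq_sum μ (show n + 1 < 2 * (n + 3) by omega),
    sum_range_succ' _ (n + 2), sum_range_succ' (fun j => lommelCoeff μ (n + 1) j * y ^ j),
    hshift, lommelCoeff_add_two_zero]
  push_cast
  ring

lemma rPoly_succ (μ : ℝ) (m : ℕ) (y : ℝ) : rPoly μ (m + 1) y = y * sPoly (μ + 1) m y := by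
  rcases m with _ | n
  · simp [rPoly, sPoly]
  rw [rPoly, sPoly, if_neg (by omega), if_neg (by omega), mul_sum, mul_sum, mul_sum]
  refine Finset.sum_congr (by congr 1) fun j _ => ?_
  rw [show n + 1 + 1 - j - 2 = n + 1 - j - 1 by omega,
    show n + 1 + 1 - 2 * j - 2 = n + 1 - 2 * j - 1 by omega,
    show μ + j + 2 = μ + 1 + j + 1 by ring]
  ring

lemma rPoly_add_two (μ : ℝ) (m : ℕ) (y : ℝ) :
    rPoly μ (m + 2) y = y * rPoly μ m y - (μ + m + 1) * rPoly μ (m + 1) y := by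
  rcases m with _ | n
  · simp [rPoly, poch]
  rw [rPoly_succ, rPoly_succ, rPoly_succ, sPoly_add_two]
  push_cast
  ring

theorem eq_rPoly_mul_add_sPoly_mul {μ y : ℝ} {W : ℕ → ℝ}
    (hW : ∀ n : ℕ, W (n + 2) = y * W n - (μ + n + 1) * W (n + 1)) (n : ℕ) :
    W n = rPoly μ n y * W 0 + sPoly μ n y * W 1 := by
  induction n using Nat.twoStepInduction with
  | zero => simp [rPoly, sPoly]
  | one => simp [rPoly_succ, sPoly, poch]
  | more n ih₀ ih₁ =>
    rw [hW, ih₀, ih₁, rPoly_add_two, sPoly_add_two]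
    ring

noncomputable def besselITerm (ν u : ℝ) (k : ℕ) : ℝ :=
  u ^ k / (k.factorial * Gamma (ν + k + 1))

noncomputable def besselISeries (ν u : ℝ) : ℝ :=
  ∑' k, besselITerm ν u k

lemma besselITerm_pos {ν u : ℝ} (hν : -1 < ν) (hu : 0 < u) (k : ℕ) :
    0 < besselITerm ν u k := by
  have : 0 < Gamma (ν + k + 1) := Gamma_pos_of_pos (by linarith [k.cast_nonneg (α := ℝ)])
  unfold besselITerm
  positivity

lemma besselITerm_succ {ν : ℝ} (hν : -1 < ν) (u : ℝ) (k : ℕ) :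
    besselITerm ν u (k + 1) = u / ((k + 1) * (ν + k + 1)) * besselITerm ν u k := by
  have hνk : ν + k + 1 ≠ 0 := by linarith [k.cast_nonneg (α := ℝ)]
  unfold besselITerm
  rw [Nat.factorial_succ, pow_succ]
  push_cast
  rw [show ν + (k + 1) + 1 = ν + k + 1 + 1 by ring, Gamma_add_one hνk]
  field_simp

lemma summable_besselITerm {ν u : ℝ} (hν : -1 < ν) (hu : 0 < u) :
    Summable (besselITerm ν u) := by
  refine summable_of_ratio_test_tendsto_lt_one zero_lt_one
    (Eventually.of_forall fun k => (besselITerm_pos hν hu k).ne') ?_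
  have hratio : ∀ k : ℕ, ‖besselITerm ν u (k + 1)‖ / ‖besselITerm ν u k‖ =
      u / ((k + 1) * (ν + k + 1)) := fun k => by
    rw [Real.norm_of_nonneg (besselITerm_pos hν hu _).le,
      Real.norm_of_nonneg (besselITerm_pos hν hu _).le, besselITerm_succ hν,
      mul_div_cancel_right₀ _ (besselITerm_pos hν hu k).ne']
  have hk : Tendsto (fun k : ℕ => (k : ℝ) + 1) atTop atTop :=
    tendsto_atTop_add_const_right _ _ tendsto_natCast_atTop_atTop
  simp only [hratio]
  exact tendsto_const_nhds.div_atTop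
    (hk.atTop_mul_atTop₀ (tendsto_atTop_add_const_left _ _ hk |>.congr fun k => by ring))

lemma mul_besselITerm_add_one (ν u : ℝ) (k : ℕ) :
    u * besselITerm (ν + 1) u k = (k + 1) * besselITerm ν u (k + 1) := by
  unfold besselITerm
  rw [Nat.factorial_succ, pow_succ]
  push_cast
  rw [show ν + 1 + k + 1 = ν + (k + 1) + 1 by ring]
  field_simp

lemma add_mul_besselITerm (ν u : ℝ) (k : ℕ) :
    (ν + k) * besselITerm ν u k = besselITerm (ν - 1) u k := by
  unfold besselITerm
  rw [show ν - 1 + k + 1 = ν + k by ring]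
  rcases eq_or_ne (ν + k) 0 with h | h
  · simp [h, Gamma_zero]
  rw [Gamma_add_one h]
  field_simp

lemma besselISeries_sub_one {ν u : ℝ} (hν : 0 < ν) (hu : 0 < u) :
    besselISeries (ν - 1) u = ν * besselISeries ν u + u * besselISeries (ν + 1) u := by
  have hshift : HasSum (fun k : ℕ => k * besselITerm ν u k) (u * besselISeries (ν + 1) u) := by
    have h := (summable_besselITerm (ν := ν + 1) (by linarith) hu).hasSum.mul_left u
    simp only [mul_besselITerm_add_one] at h
    rw [← hasSum_nat_add_iff' 1]
    simpa [besselISeries] using h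
  have hsum := ((summable_besselITerm (ν := ν) (by linarith) hu).hasSum.mul_left ν).add hshift
  rw [show (fun k : ℕ => ν * besselITerm ν u k + k * besselITerm ν u k) =
      besselITerm (ν - 1) u from funext fun k => by rw [← add_mul_besselITerm]; ring] at hsum
  exact hsum.tsum_eq

lemma omegaW_eq_besselISeries (ν : ℝ) {a x : ℝ} (ha : 0 ≤ a) (hx : 0 < x) :
    omegaW ν a x = a ^ ν * x ^ ν * besselISeries ν (a ^ 2 * x) := by
  have hz : (2 * a * √x) ^ 2 / 4 = a ^ 2 * x := by
    rw [mul_pow, sq_sqrt hx.le]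
    ring
  have hpow : (2 * a * √x / 2) ^ ν = a ^ ν * x ^ (ν / 2) := by
    rw [show 2 * a * √x / 2 = a * √x by ring, mul_rpow ha (sqrt_nonneg x), sqrt_eq_rpow,
      ← rpow_mul hx.le, one_div_mul_eq_div]
  rw [omegaW, besselI, hz, hpow, ← add_halves ν, rpow_add hx, add_halves, besselISeries]
  unfold besselITerm
  ring

lemma omegaW_add_one {ν a x : ℝ} (hν : 0 < ν) (ha : 0 < a) (hx : 0 < x) :
    omegaW (ν + 1) a x = x * omegaW (ν - 1) a x - ν / a * omegaW ν a x := by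
  rw [omegaW_eq_besselISeries _ ha.le hx, omegaW_eq_besselISeries _ ha.le hx,
    omegaW_eq_besselISeries _ ha.le hx, besselISeries_sub_one hν (by positivity),
    rpow_add_one ha.ne', rpow_add_one hx.ne', rpow_sub_one ha.ne', rpow_sub_one hx.ne']
  field_simp
  ring

/-- expansion of `ω_{μ+m,a}` in terms of `ω_{μ,a}` and `ω_{μ+1,a}`. -/
theorem omegaW_expansion (μ a : ℝ) (hμ : -1 < μ) (ha : 0 < a) (m : ℕ) (x : ℝ) (hx : 0 < x) :
    omegaW (μ + m) a x =
      a ^ (-(m : ℤ)) * rPoly μ m (a ^ 2 * x) * omegaW μ a x +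
        a ^ (1 - (m : ℤ)) * sPoly μ m (a ^ 2 * x) * omegaW (μ + 1) a x := by
  have hrec : ∀ n : ℕ, a ^ (n + 2) * omegaW (μ + (n + 2 : ℕ)) a x =
      a ^ 2 * x * (a ^ n * omegaW (μ + n) a x) -
        (μ + n + 1) * (a ^ (n + 1) * omegaW (μ + (n + 1 : ℕ)) a x) := fun n => by
    have hν : 0 < μ + (n + 1 : ℕ) := by push_cast; linarith [n.cast_nonneg (α := ℝ)]
    have h := omegaW_add_one hν ha hx
    rw [show μ + (n + 1 : ℕ) + 1 = μ + (n + 2 : ℕ) by push_cast; ring,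
      show μ + (n + 1 : ℕ) - 1 = μ + n by push_cast; ring] at h
    rw [h]
    field_simp
    push_cast
    ring
  have h := eq_rPoly_mul_add_sPoly_mul (W := fun n => a ^ n * omegaW (μ + n) a x) hrec m
  simp only [pow_zero, one_mul, pow_one, Nat.cast_zero, add_zero, Nat.cast_one] at h
  rw [zpow_neg, zpow_sub₀ ha.ne', zpow_natCast, zpow_one]
  field_simp
  linear_combination h
end

section
/- Let μ > −1, ν > 0 and b > a > 0, and let i, j ≥ 0 be integers. Then ∫_0^∞ ω_{μ+i,a}(x) ρ_{ν+j,b}(x) dx = a^{μ+i} b^{ν+j} Γ(μ+ν+1+i+j) / (2 (b²−a²)^{μ+ν+1+i+j}); in particular the integral converges absolutely. -/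
open MeasureTheory Real Filter Set Finset

/-!
Expanding `I_μ` in its power series writes `ω_{μ,a}(x) ρ_{ν,b}(x)` as a series
`∑ₖ cₖ x^{μ+k+ν/2} K_ν(2b√x)` of nonnegative terms, so the integral can be computed termwise
as a Lebesgue integral in `ℝ≥0∞`. Splitting `cosh` into exponentials and substituting
`u = (z/2) eᵗ` gives `K_ν(z) = ½ ∫₀^∞ e^{-u - z²/4u} (2u/z)^ν du/u`; after exchanging the order
of integration, the Mellin transform `∫₀^∞ x^q K_ν(2b√x) dx` becomes a product of two Gamma
integrals. What remains is the binomial series `∑ₖ Γ(s+k) rᵏ/k! = Γ(s) (1-r)^{-s}` with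
`r = a²/b²`, obtained by integrating the exponential series against `x^{s-1} e^{-x}`.
-/

open scoped ENNReal

section General

variable {α : Type*} [MeasurableSpace α] {m : Measure α}

theorem integrable_and_integral_eq_of_lintegral_ofReal_eq {f : α → ℝ} {c : ℝ}
    (hf : AEStronglyMeasurable f m) (hf_nonneg : 0 ≤ᵐ[m] f) (hc : 0 ≤ c)
    (h : ∫⁻ x, ENNReal.ofReal (f x) ∂m = ENNReal.ofReal c) :
    Integrable f m ∧ ∫ x, f x ∂m = c := by
  refine ⟨⟨hf, ?_⟩, ?_⟩
  · rw [hasFiniteIntegral_iff_ofReal hf_nonneg, h]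
    exact ENNReal.ofReal_lt_top
  · rw [integral_eq_lintegral_of_nonneg_ae hf_nonneg hf, h, ENNReal.toReal_ofReal hc]

theorem ae_ofReal_tsum_eq_tsum_ofReal {ι : Type*} {f : ι → α → ℝ}
    (hf_nonneg : ∀ᵐ x ∂m, ∀ k, 0 ≤ f k x)
    (hm : AEMeasurable (fun x => ∑' k, ENNReal.ofReal (f k x)) m)
    (hfin : ∫⁻ x, ∑' k, ENNReal.ofReal (f k x) ∂m ≠ ∞) :
    ∀ᵐ x ∂m, ENNReal.ofReal (∑' k, f k x) = ∑' k, ENNReal.ofReal (f k x) := by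
  filter_upwards [ae_lt_top' hm hfin, hf_nonneg] with x hx_fin hx_nonneg
  have hsum : Summable fun k => f k x := by
    simpa only [ENNReal.toReal_ofReal (hx_nonneg _)] using ENNReal.summable_toReal hx_fin.ne
  exact ENNReal.ofReal_tsum_of_nonneg hx_nonneg hsum

end General

theorem lintegral_rpow_mul_exp_neg_mul_Ioi {s c : ℝ} (hs : 0 < s) (hc : 0 < c) :
    ∫⁻ x in Ioi 0, ENNReal.ofReal (x ^ (s - 1) * exp (-(c * x))) =
      ENNReal.ofReal ((1 / c) ^ s * Gamma s) := by
  rw [← integral_rpow_mul_exp_neg_mul_Ioi hs hc, ofReal_integral_eq_lintegral_ofReal]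
  · have h := integrableOn_rpow_mul_exp_neg_mul_rpow (s := s - 1) (by linarith) one_pos hc
    simp only [rpow_one, neg_mul] at h
    exact h
  · filter_upwards [ae_restrict_mem measurableSet_Ioi] with x hx
    have := rpow_nonneg (le_of_lt hx) (s - 1)
    positivity

theorem tsum_ofReal_exp_series {y : ℝ} (hy : 0 ≤ y) :
    ∑' k : ℕ, ENNReal.ofReal (y ^ k / k.factorial) = ENNReal.ofReal (exp y) := by
  rw [exp_eq_exp_ℝ, NormedSpace.exp_eq_tsum_div,
    ENNReal.ofReal_tsum_of_nonneg (fun k => by positivity) (summable_pow_div_factorial y)]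

theorem tsum_ofReal_Gamma_add_mul_pow_div_factorial {s r : ℝ} (hs : 0 < s) (hr₀ : 0 ≤ r)
    (hr₁ : r < 1) :
    ∑' k : ℕ, ENNReal.ofReal (Gamma (s + k) * r ^ k / k.factorial) =
      ENNReal.ofReal (Gamma s / (1 - r) ^ s) := by
  have hterm (k : ℕ) : ENNReal.ofReal (Gamma (s + k) * r ^ k / k.factorial) =
      ∫⁻ x in Ioi 0, ENNReal.ofReal (x ^ (s - 1) * exp (-(1 * x))) *
        ENNReal.ofReal ((r * x) ^ k / k.factorial) := by
    calc ENNReal.ofReal (Gamma (s + k) * r ^ k / k.factorial)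
        = ENNReal.ofReal (r ^ k / k.factorial) *
            ENNReal.ofReal ((1 / 1) ^ (s + k) * Gamma (s + k)) := by
          rw [← ENNReal.ofReal_mul (by positivity), div_one, one_rpow]
          ring_nf
      _ = ∫⁻ x in Ioi 0, ENNReal.ofReal (r ^ k / k.factorial) *
            ENNReal.ofReal (x ^ (s + k - 1) * exp (-(1 * x))) := by
          rw [lintegral_const_mul' _ _ ENNReal.ofReal_ne_top,
            lintegral_rpow_mul_exp_neg_mul_Ioi (by positivity) one_pos]
      _ = _ := by
          refine setLIntegral_congr_fun measurableSet_Ioi fun x (hx : 0 < x) => ?_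
          rw [← ENNReal.ofReal_mul (by positivity), ← ENNReal.ofReal_mul (by positivity),
            show s + k - 1 = s - 1 + k by ring, rpow_add hx, rpow_natCast]
          ring_nf
  have hsum : ∀ x ∈ Ioi (0 : ℝ), ∑' k : ℕ, ENNReal.ofReal (x ^ (s - 1) * exp (-(1 * x))) *
      ENNReal.ofReal ((r * x) ^ k / k.factorial) =
        ENNReal.ofReal (x ^ (s - 1) * exp (-((1 - r) * x))) := by
    intro x (hx : 0 < x)
    rw [ENNReal.tsum_mul_left, tsum_ofReal_exp_series (by positivity),
      ← ENNReal.ofReal_mul (by positivity), mul_assoc, ← exp_add]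
    ring_nf
  rw [tsum_congr hterm, ← lintegral_tsum fun k => by fun_prop,
    setLIntegral_congr_fun measurableSet_Ioi hsum,
    lintegral_rpow_mul_exp_neg_mul_Ioi hs (by linarith), one_div, inv_rpow (by linarith)]
  ring_nf

@[fun_prop]
theorem measurable_besselI (μ : ℝ) : Measurable (besselI μ) := by
  unfold besselI
  fun_prop

@[fun_prop]
theorem measurable_besselK (ν : ℝ) : Measurable (besselK ν) := by
  have hc : Continuous fun p : ℝ × ℝ => exp (-p.1 * cosh p.2) * cosh (ν * p.2) := by fun_prop
  exact hc.stronglyMeasurable.integral_prod_right'.measurable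

theorem besselI_nonneg {μ z : ℝ} (hμ : -1 < μ) (hz : 0 ≤ z) : 0 ≤ besselI μ z := by
  refine mul_nonneg (rpow_nonneg (by positivity) _) (tsum_nonneg fun k => ?_)
  have := Gamma_pos_of_pos (show 0 < μ + k + 1 by linarith [k.cast_nonneg (α := ℝ)])
  positivity

theorem besselK_nonneg (ν z : ℝ) : 0 ≤ besselK ν z :=
  integral_nonneg fun _ => mul_nonneg (exp_pos _).le (cosh_pos _).le

theorem omegaW_nonneg {μ a x : ℝ} (hμ : -1 < μ) (ha : 0 ≤ a) (hx : 0 ≤ x) : 0 ≤ omegaW μ a x :=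
  mul_nonneg (rpow_nonneg hx _) (besselI_nonneg hμ (by positivity))

theorem rhoW_nonneg (ν b : ℝ) {x : ℝ} (hx : 0 ≤ x) : 0 ≤ rhoW ν b x :=
  mul_nonneg (rpow_nonneg hx _) (besselK_nonneg _ _)

theorem lintegral_Ioi_zero_eq_lintegral_comp_const_mul_exp {c : ℝ} (hc : 0 < c)
    (g : ℝ → ℝ≥0∞) :
    ∫⁻ u in Ioi 0, g u = ∫⁻ t, ENNReal.ofReal (c * exp t) * g (c * exp t) := by
  have himage : (fun t => c * exp t) '' univ = Set.Ioi 0 := by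
    rw [image_univ, range_comp' (c * ·) exp, range_exp, image_const_mul_Ioi_zero hc]
  rw [← himage, lintegral_image_eq_lintegral_abs_deriv_mul MeasurableSet.univ
    (fun t _ => ((hasDerivAt_exp t).const_mul c).hasDerivWithinAt)
    (fun t₁ _ t₂ _ h => exp_injective (mul_left_cancel₀ hc.ne' h)), Measure.restrict_univ]
  simp only [abs_of_pos (mul_pos hc (exp_pos _))]

theorem lintegral_eq_setLIntegral_Ioi_comp_neg_add {g : ℝ → ℝ≥0∞} (hg : Measurable g) :
    ∫⁻ t, g t = ∫⁻ t in Ioi 0, (g (-t) + g t) := by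
  have himage : Neg.neg '' Ioi (0 : ℝ) = Set.Iio 0 := by simp
  rw [← lintegral_add_compl g measurableSet_Iio, compl_Iio,
    ← setLIntegral_congr (Ioi_ae_eq_Ici (μ := volume)), ← himage,
    lintegral_image_eq_lintegral_abs_deriv_mul measurableSet_Ioi
      (fun t _ => (hasDerivAt_neg t).hasDerivWithinAt) neg_injective.injOn,
    lintegral_add_left (by fun_prop)]
  simp

theorem lintegral_Ioi_exp_neg_mul_cosh_mul_cosh (z ν : ℝ) :
    ∫⁻ t in Ioi 0, ENNReal.ofReal (exp (-z * cosh t) * cosh (ν * t)) =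
      ENNReal.ofReal 2⁻¹ * ∫⁻ t, ENNReal.ofReal (exp (-z * cosh t) * exp (ν * t)) := by
  rw [lintegral_eq_setLIntegral_Ioi_comp_neg_add (by fun_prop),
    ← lintegral_const_mul' _ _ ENNReal.ofReal_ne_top]
  refine setLIntegral_congr_fun measurableSet_Ioi fun t _ => ?_
  rw [← ENNReal.ofReal_add (by positivity) (by positivity), ← ENNReal.ofReal_mul (by norm_num),
    cosh_neg, cosh_eq (ν * t)]
  ring_nf

theorem lintegral_exp_neg_mul_cosh_mul_exp {z : ℝ} (hz : 0 < z) (ν : ℝ) :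
    ∫⁻ t, ENNReal.ofReal (exp (-z * cosh t) * exp (ν * t)) =
      ∫⁻ u in Ioi 0, ENNReal.ofReal (exp (-u - z ^ 2 / (4 * u)) * (2 * u / z) ^ ν / u) := by
  rw [lintegral_Ioi_zero_eq_lintegral_comp_const_mul_exp (half_pos hz)]
  refine lintegral_congr fun t => ?_
  have hu : 0 < z / 2 * exp t := by positivity
  rw [← ENNReal.ofReal_mul hu.le]
  congr 1
  have hpow : (2 * (z / 2 * exp t) / z) ^ ν = exp (ν * t) := by
    rw [show 2 * (z / 2 * exp t) / z = exp t by field_simp, ← exp_mul, mul_comm]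
  have hexp : -(z / 2 * exp t) - z ^ 2 / (4 * (z / 2 * exp t)) = -z * cosh t := by
    rw [cosh_eq, exp_neg]
    field_simp
    ring
  rw [hpow, hexp]
  field_simp

theorem lintegral_exp_neg_sub_div_mul_rpow_ne_top {ν z : ℝ} (hν : 0 < ν) (hz : 0 < z) :
    ∫⁻ u in Ioi 0, ENNReal.ofReal (exp (-u - z ^ 2 / (4 * u)) * (2 * u / z) ^ ν / u) ≠ ∞ := by
  have hle : ∀ u ∈ Ioi (0 : ℝ),
      ENNReal.ofReal (exp (-u - z ^ 2 / (4 * u)) * (2 * u / z) ^ ν / u) ≤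
        ENNReal.ofReal ((2 / z) ^ ν) * ENNReal.ofReal (u ^ (ν - 1) * exp (-(1 * u))) := by
    intro u (hu : 0 < u)
    rw [← ENNReal.ofReal_mul (by positivity)]
    refine ENNReal.ofReal_le_ofReal ?_
    have hsplit : (2 * u / z) ^ ν / u = (2 / z) ^ ν * u ^ (ν - 1) := by
      rw [mul_div_right_comm, mul_rpow (by positivity) hu.le, rpow_sub_one hu.ne']
      ring
    have hexp : exp (-u - z ^ 2 / (4 * u)) ≤ exp (-(1 * u)) := by
      have : 0 ≤ z ^ 2 / (4 * u) := by positivity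
      exact exp_le_exp.mpr (by linarith)
    rw [mul_div_assoc, hsplit]
    calc exp (-u - z ^ 2 / (4 * u)) * ((2 / z) ^ ν * u ^ (ν - 1))
        ≤ exp (-(1 * u)) * ((2 / z) ^ ν * u ^ (ν - 1)) := by gcongr
      _ = _ := by ring
  refine ne_top_of_le_ne_top ?_ (setLIntegral_mono' measurableSet_Ioi hle)
  rw [lintegral_const_mul' _ _ ENNReal.ofReal_ne_top, lintegral_rpow_mul_exp_neg_mul_Ioi hν one_pos]
  finiteness

theorem ofReal_besselK {ν z : ℝ} (hν : 0 < ν) (hz : 0 < z) :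
    ENNReal.ofReal (besselK ν z) = ENNReal.ofReal 2⁻¹ *
      ∫⁻ u in Ioi 0, ENNReal.ofReal (exp (-u - z ^ 2 / (4 * u)) * (2 * u / z) ^ ν / u) := by
  have hK : besselK ν z = (∫⁻ t in Ioi 0,
      ENNReal.ofReal (exp (-z * cosh t) * cosh (ν * t))).toReal :=
    integral_eq_lintegral_of_nonneg_ae
      (ae_of_all _ fun t => mul_nonneg (exp_pos _).le (cosh_pos _).le)
      (by fun_prop)
  rw [hK, lintegral_Ioi_exp_neg_mul_cosh_mul_cosh, lintegral_exp_neg_mul_cosh_mul_exp hz,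
    ENNReal.ofReal_toReal]
  exact ENNReal.mul_ne_top ENNReal.ofReal_ne_top
    (lintegral_exp_neg_sub_div_mul_rpow_ne_top hν hz)

theorem ofReal_rpow_mul_besselK_eq_lintegral {ν b q x : ℝ} (hν : 0 < ν) (hb : 0 < b)
    (hx : 0 < x) :
    ENNReal.ofReal (x ^ q * besselK ν (2 * b * √x)) = ENNReal.ofReal 2⁻¹ *
      ∫⁻ u in Ioi 0, ENNReal.ofReal (u ^ (ν - 1) * exp (-u) / b ^ ν) *
        ENNReal.ofReal (x ^ (q - ν / 2) * exp (-(b ^ 2 / u * x))) := by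
  rw [ENNReal.ofReal_mul (rpow_nonneg hx.le q), ofReal_besselK hν (by positivity),
    mul_left_comm, ← lintegral_const_mul' _ _ ENNReal.ofReal_ne_top]
  congr 1
  refine setLIntegral_congr_fun measurableSet_Ioi fun u (hu : 0 < u) => ?_
  rw [← ENNReal.ofReal_mul (by positivity), ← ENNReal.ofReal_mul (by positivity)]
  congr 1
  have hsq : (2 * b * √x) ^ 2 / (4 * u) = b ^ 2 / u * x := by
    rw [mul_pow, sq_sqrt hx.le]
    field_simp
    ring
  have hpow : (2 * u / (2 * b * √x)) ^ ν = u ^ (ν - 1) * u / (b ^ ν * x ^ (ν / 2)) := by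
    rw [show 2 * u / (2 * b * √x) = u / (b * √x) by field_simp,
      div_rpow hu.le (by positivity), mul_rpow hb.le (sqrt_nonneg x), sqrt_eq_rpow,
      ← rpow_mul hx.le, ← rpow_add_one hu.ne']
    ring_nf
  have hxq : x ^ q = x ^ (q - ν / 2) * x ^ (ν / 2) := by
    rw [← rpow_add hx]
    ring_nf
  rw [hsq, hpow, hxq, show -u - b ^ 2 / u * x = -u + -(b ^ 2 / u * x) by ring, exp_add]
  have : 0 < x ^ (ν / 2) := rpow_pos_of_pos hx _
  have : 0 < b ^ ν := rpow_pos_of_pos hb _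
  field_simp

theorem lintegral_rpow_mul_besselK {ν b q : ℝ} (hν : 0 < ν) (hb : 0 < b) (hq : ν / 2 < q + 1) :
    ∫⁻ x in Ioi 0, ENNReal.ofReal (x ^ q * besselK ν (2 * b * √x)) =
      ENNReal.ofReal (Gamma (q + 1 + ν / 2) * Gamma (q + 1 - ν / 2) / (2 * b ^ (2 * q + 2))) := by
  set s := q + 1 - ν / 2 with hs_def
  have hs : 0 < s := by linarith
  have hinner : ∀ u ∈ Ioi (0 : ℝ), ∫⁻ x in Ioi 0, ENNReal.ofReal (u ^ (ν - 1) * exp (-u) / b ^ ν) *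
      ENNReal.ofReal (x ^ (q - ν / 2) * exp (-(b ^ 2 / u * x))) =
        ENNReal.ofReal (Gamma s / b ^ (2 * q + 2)) *
          ENNReal.ofReal (u ^ (q + 1 + ν / 2 - 1) * exp (-(1 * u))) := by
    intro u (hu : 0 < u)
    rw [lintegral_const_mul' _ _ ENNReal.ofReal_ne_top, show q - ν / 2 = s - 1 by ring,
      lintegral_rpow_mul_exp_neg_mul_Ioi hs (by positivity),
      ← ENNReal.ofReal_mul (by positivity), ← ENNReal.ofReal_mul (by positivity)]
    congr 1
    have hb2 : (b ^ 2) ^ s = b ^ (2 * s) := by rw [← rpow_two, ← rpow_mul hb.le]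
    have hbq : b ^ (2 * q + 2) = b ^ ν * b ^ (2 * s) := by rw [← rpow_add hb, hs_def]; ring_nf
    have huq : u ^ (q + 1 + ν / 2 - 1) = u ^ (ν - 1) * u ^ s := by rw [← rpow_add hu, hs_def]; ring_nf
    rw [one_div_div, div_rpow hu.le (by positivity), hb2, hbq, huq, one_mul]
    have : 0 < b ^ ν := rpow_pos_of_pos hb _
    have : 0 < b ^ (2 * s) := rpow_pos_of_pos hb _
    field_simp
  calc ∫⁻ x in Ioi 0, ENNReal.ofReal (x ^ q * besselK ν (2 * b * √x))
      = ENNReal.ofReal 2⁻¹ * ∫⁻ x in Ioi 0, ∫⁻ u in Ioi 0,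
          ENNReal.ofReal (u ^ (ν - 1) * exp (-u) / b ^ ν) *
            ENNReal.ofReal (x ^ (q - ν / 2) * exp (-(b ^ 2 / u * x))) := by
        rw [← lintegral_const_mul' _ _ ENNReal.ofReal_ne_top]
        exact setLIntegral_congr_fun measurableSet_Ioi fun x hx =>
          ofReal_rpow_mul_besselK_eq_lintegral hν hb hx
    _ = ENNReal.ofReal 2⁻¹ * ∫⁻ u in Ioi 0, ∫⁻ x in Ioi 0,
          ENNReal.ofReal (u ^ (ν - 1) * exp (-u) / b ^ ν) *
            ENNReal.ofReal (x ^ (q - ν / 2) * exp (-(b ^ 2 / u * x))) := by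
        rw [lintegral_lintegral_swap (by fun_prop)]
    _ = _ := by
        rw [setLIntegral_congr_fun measurableSet_Ioi hinner,
          lintegral_const_mul' _ _ ENNReal.ofReal_ne_top,
          lintegral_rpow_mul_exp_neg_mul_Ioi (by linarith) one_pos,
          ← ENNReal.ofReal_mul (by positivity), ← ENNReal.ofReal_mul (by norm_num)]
        congr 1
        rw [div_one, one_rpow]
        ring

noncomputable def omegaWRhoWTerm (μ ν a b : ℝ) (k : ℕ) (x : ℝ) : ℝ :=
  a ^ μ * (a ^ 2) ^ k / (k.factorial * Gamma (μ + k + 1)) *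
    (x ^ (μ + k + ν / 2) * besselK ν (2 * b * √x))

@[fun_prop]
theorem measurable_omegaWRhoWTerm (μ ν a b : ℝ) (k : ℕ) :
    Measurable (omegaWRhoWTerm μ ν a b k) := by
  unfold omegaWRhoWTerm
  fun_prop

theorem omegaWRhoWTerm_nonneg {μ ν a b x : ℝ} (hμ : -1 < μ) (ha : 0 ≤ a) (hx : 0 ≤ x) (k : ℕ) :
    0 ≤ omegaWRhoWTerm μ ν a b k x := by
  have := Gamma_pos_of_pos (show 0 < μ + k + 1 by linarith [k.cast_nonneg (α := ℝ)])
  have := besselK_nonneg ν (2 * b * √x)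
  unfold omegaWRhoWTerm
  positivity

theorem omegaW_mul_rhoW_eq_tsum {μ ν a b x : ℝ} (ha : 0 ≤ a) (hx : 0 < x) :
    omegaW μ a x * rhoW ν b x = ∑' k, omegaWRhoWTerm μ ν a b k x := by
  unfold omegaW rhoW besselI omegaWRhoWTerm
  rw [← tsum_mul_left, ← tsum_mul_left, ← tsum_mul_right]
  refine tsum_congr fun k => ?_
  have hsq : (2 * a * √x) ^ 2 / 4 = a ^ 2 * x := by
    rw [mul_pow, sq_sqrt hx.le]
    ring
  have hhalf : (2 * a * √x / 2) ^ μ = a ^ μ * x ^ (μ / 2) := by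
    rw [mul_div_right_comm, mul_div_cancel_left₀ _ two_ne_zero, mul_rpow ha (sqrt_nonneg x),
      sqrt_eq_rpow, ← rpow_mul hx.le]
    ring_nf
  have hxpow : x ^ (μ + k + ν / 2) = x ^ (μ / 2) * x ^ (μ / 2) * x ^ k * x ^ (ν / 2) := by
    rw [← rpow_natCast, ← rpow_add hx, ← rpow_add hx, ← rpow_add hx]
    ring_nf
  rw [hsq, hhalf, hxpow, mul_pow]
  ring

theorem lintegral_omegaWRhoWTerm {μ ν a b : ℝ} (hμ : -1 < μ) (hν : 0 < ν) (ha : 0 ≤ a)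
    (hb : 0 < b) (k : ℕ) :
    ∫⁻ x in Ioi 0, ENNReal.ofReal (omegaWRhoWTerm μ ν a b k x) =
      ENNReal.ofReal (a ^ μ / (2 * b ^ (2 * μ + ν + 2))) *
        ENNReal.ofReal (Gamma (μ + ν + 1 + k) * (a ^ 2 / b ^ 2) ^ k / k.factorial) := by
  have := Gamma_pos_of_pos (show 0 < μ + k + 1 by linarith [k.cast_nonneg (α := ℝ)])
  simp only [omegaWRhoWTerm, ENNReal.ofReal_mul (by positivity : 0 ≤ a ^ μ * (a ^ 2) ^ k /
    (k.factorial * Gamma (μ + k + 1)))]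
  rw [lintegral_const_mul' _ _ ENNReal.ofReal_ne_top,
    lintegral_rpow_mul_besselK hν hb (by linarith [k.cast_nonneg (α := ℝ)]),
    ← ENNReal.ofReal_mul (by positivity), ← ENNReal.ofReal_mul (by positivity)]
  congr 1
  have hb_pow : b ^ (2 * (μ + k + ν / 2) + 2) = b ^ (2 * μ + ν + 2) * (b ^ 2) ^ k := by
    rw [← pow_mul, ← rpow_natCast, ← rpow_add hb]
    push_cast
    ring_nf
  rw [hb_pow, show μ + k + ν / 2 + 1 + ν / 2 = μ + ν + 1 + k by ring,
    show μ + k + ν / 2 + 1 - ν / 2 = μ + k + 1 by ring, div_pow]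
  have : 0 < b ^ (2 * μ + ν + 2) := rpow_pos_of_pos hb _
  field_simp

theorem lintegral_tsum_omegaWRhoWTerm {μ ν a b : ℝ} (hμ : -1 < μ) (hν : 0 < ν) (ha : 0 < a)
    (hab : a < b) :
    ∫⁻ x in Ioi 0, ∑' k, ENNReal.ofReal (omegaWRhoWTerm μ ν a b k x) =
      ENNReal.ofReal (a ^ μ * b ^ ν * Gamma (μ + ν + 1) / (2 * (b ^ 2 - a ^ 2) ^ (μ + ν + 1))) := by
  have hb : 0 < b := ha.trans hab
  have hba : 0 < b ^ 2 - a ^ 2 := by nlinarith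
  have hr : a ^ 2 / b ^ 2 < 1 := (div_lt_one (by positivity)).mpr (by gcongr)
  rw [lintegral_tsum fun k => by fun_prop,
    tsum_congr (lintegral_omegaWRhoWTerm hμ hν ha.le hb), ENNReal.tsum_mul_left,
    tsum_ofReal_Gamma_add_mul_pow_div_factorial (by linarith) (by positivity) hr,
    ← ENNReal.ofReal_mul (by positivity)]
  congr 1
  have hb_pow : (b ^ 2) ^ (μ + ν + 1) = b ^ (2 * μ + ν + 2) * b ^ ν := by
    rw [← rpow_two, ← rpow_mul hb.le, ← rpow_add hb]
    ring_nf
  rw [one_sub_div (by positivity), div_rpow hba.le (by positivity), hb_pow]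
  have : 0 < b ^ (2 * μ + ν + 2) := rpow_pos_of_pos hb _
  have : 0 < b ^ ν := rpow_pos_of_pos hb _
  have : 0 < (b ^ 2 - a ^ 2) ^ (μ + ν + 1) := rpow_pos_of_pos hba _
  field_simp

theorem lintegral_omegaW_mul_rhoW {μ ν a b : ℝ} (hμ : -1 < μ) (hν : 0 < ν) (ha : 0 < a)
    (hab : a < b) :
    ∫⁻ x in Ioi 0, ENNReal.ofReal (omegaW μ a x * rhoW ν b x) =
      ENNReal.ofReal (a ^ μ * b ^ ν * Gamma (μ + ν + 1) / (2 * (b ^ 2 - a ^ 2) ^ (μ + ν + 1))) := by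
  have hsum := lintegral_tsum_omegaWRhoWTerm hμ hν ha hab
  -- Summability of the series at almost every `x` comes from the finiteness of its integral.
  have hae : ∀ᵐ x ∂volume.restrict (Ioi 0), ENNReal.ofReal (∑' k, omegaWRhoWTerm μ ν a b k x) =
      ∑' k, ENNReal.ofReal (omegaWRhoWTerm μ ν a b k x) := by
    refine ae_ofReal_tsum_eq_tsum_ofReal ?_ (by fun_prop) (hsum ▸ ENNReal.ofReal_ne_top)
    filter_upwards [ae_restrict_mem measurableSet_Ioi] with x (hx : 0 < x)
    exact omegaWRhoWTerm_nonneg hμ ha.le hx.le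
  calc ∫⁻ x in Ioi 0, ENNReal.ofReal (omegaW μ a x * rhoW ν b x)
      = ∫⁻ x in Ioi 0, ENNReal.ofReal (∑' k, omegaWRhoWTerm μ ν a b k x) :=
        setLIntegral_congr_fun measurableSet_Ioi fun x hx => by
          rw [omegaW_mul_rhoW_eq_tsum ha.le hx]
    _ = ∫⁻ x in Ioi 0, ∑' k, ENNReal.ofReal (omegaWRhoWTerm μ ν a b k x) :=
        lintegral_congr_ae hae
    _ = _ := hsum

/-- the integral `∫_0^∞ ω_{μ+i,a}(x) ρ_{ν+j,b}(x) dx`. -/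
theorem integral_omegaW_mul_rhoW (μ ν a b : ℝ) (hμ : -1 < μ) (hν : 0 < ν)
    (ha : 0 < a) (hab : a < b) (i j : ℕ) :
    IntegrableOn (fun x => omegaW (μ + i) a x * rhoW (ν + j) b x) (Set.Ioi 0) ∧
      ∫ x in Set.Ioi (0 : ℝ), omegaW (μ + i) a x * rhoW (ν + j) b x =
        a ^ (μ + i) * b ^ (ν + j) * Real.Gamma (μ + ν + 1 + i + j) /
          (2 * (b ^ 2 - a ^ 2) ^ (μ + ν + 1 + i + j)) := by
  have hμi : -1 < μ + i := by linarith [i.cast_nonneg (α := ℝ)]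
  have hνj : 0 < ν + j := by linarith [j.cast_nonneg (α := ℝ)]
  have hlintegral := lintegral_omegaW_mul_rhoW hμi hνj ha hab
  rw [show μ + i + (ν + j) + 1 = μ + ν + 1 + i + j by ring] at hlintegral
  have hΓ : 0 < Gamma (μ + ν + 1 + i + j) := Gamma_pos_of_pos (by linarith)
  have hb : 0 < b := ha.trans hab
  have hba : 0 < b ^ 2 - a ^ 2 := by nlinarith
  refine integrable_and_integral_eq_of_lintegral_ofReal_eq
    (by unfold omegaW rhoW; fun_prop) ?_ (by positivity) hlintegral
  filter_upwards [ae_restrict_mem measurableSet_Ioi] with x (hx : 0 < x)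
  exact mul_nonneg (omegaW_nonneg hμi ha.le hx.le) (rhoW_nonneg _ _ hx.le)
end

section
/- Let μ > −1, ν > 0, c > 0 and n ≥ 1. Then, as b → +∞ with a = b − c (so that eventually a > 0), the functions x ↦ √(4b/π) e^{2bx} · [a^μ b^ν Γ(μ+ν+1+n) n! / (2(b²−a²)^{μ+ν+1})] · P_n^{μ,ν,a,b}(x²) converge to the function x ↦ x^{ν−1/2} L_n^{(μ+ν)}(2cx), uniformly for x in any compact subset of (0, ∞), where L_n^{(α)}(x) = (−1)^n Σ_{j=0}^n C(n,j) [Γ(α+1+n)/Γ(α+1+j)] (−x)^j is the monic generalized Laguerre polynomial. -/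
/-!
Laplace's method gives `√(2z/π) e^z K_ν(z) → 1` as `z → ∞`: after the substitution `t = s / √z` in
the integral defining `K_ν`, the integrand `exp(-z (cosh(s/√z) - 1)) cosh(ν s/√z)` tends to
`exp(-s²/2)` and, by `1 + t²/2 ≤ cosh t ≤ exp(t²/2)`, is dominated by `exp(-s²/4)` once `z ≥ 2ν²`.

With `a = b - c` and `Φ_ν(z) = √(2z/π) e^z K_ν(z)`, the normalised `P_n(x²)` equals
`x^(ν-1/2) (-1)^n Σ_j C(n,j) Γ(μ+ν+1+n)/Γ(μ+ν+1+j) ((a²-b²)x/b)^j Φ_{ν+j}(2bx)`.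
Since `(a²-b²)/b → -2c`, this tends to `x^(ν-1/2) L_n^{(μ+ν)}(2cx)` jointly in `(b, x)` near every
point of `(0, ∞)`, and on a compact set such joint convergence is uniform convergence.
-/

open MeasureTheory Real Filter Set Finset

open Topology

lemma Real.cosh_sub_one_eq_two_mul_sinh_half_sq (t : ℝ) : cosh t - 1 = 2 * sinh (t / 2) ^ 2 := by
  have h := cosh_two_mul (t / 2)
  rw [mul_div_cancel₀ t two_ne_zero, cosh_sq] at h
  linarith

lemma Real.one_add_sq_div_two_le_cosh (t : ℝ) : 1 + t ^ 2 / 2 ≤ cosh t := by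
  have h : |t / 2| ≤ |sinh (t / 2)| := by
    rw [abs_sinh]; exact self_le_sinh_iff.mpr (abs_nonneg _)
  nlinarith [cosh_sub_one_eq_two_mul_sinh_half_sq t, sq_le_sq.mpr h]

lemma Real.tendsto_sinh_div_self : Tendsto (fun u => sinh u / u) (𝓝[≠] 0) (𝓝 1) := by
  simpa [div_eq_inv_mul] using (hasDerivAt_sinh 0).tendsto_slope_zero

lemma Real.tendsto_cosh_sub_one_div_sq :
    Tendsto (fun t => (cosh t - 1) / t ^ 2) (𝓝[≠] 0) (𝓝 (1 / 2)) := by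
  have half : Tendsto (fun t : ℝ => t / 2) (𝓝[≠] 0) (𝓝[≠] 0) :=
    tendsto_nhdsWithin_iff.mpr ⟨(continuous_id.div_const 2).tendsto' 0 0 (by simp)
      |>.mono_left nhdsWithin_le_nhds,
      eventually_mem_nhdsWithin.mono fun t ht => div_ne_zero ht two_ne_zero⟩
  have h := ((tendsto_sinh_div_self.comp half).pow 2).const_mul (1 / 2)
  rw [one_pow, mul_one] at h
  refine h.congr' (eventually_mem_nhdsWithin.mono fun t (ht : t ≠ 0) => ?_)
  simp only [Function.comp_apply, cosh_sub_one_eq_two_mul_sinh_half_sq]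
  field_simp

lemma Real.tendsto_mul_cosh_div_sqrt_sub_one (s : ℝ) :
    Tendsto (fun z => z * (cosh (s / √z) - 1)) atTop (𝓝 (s ^ 2 / 2)) := by
  rcases eq_or_ne s 0 with rfl | hs
  · simp
  have ht : Tendsto (fun z => s / √z) atTop (𝓝[≠] 0) :=
    tendsto_nhdsWithin_iff.mpr ⟨tendsto_const_nhds.div_atTop tendsto_sqrt_atTop,
      (eventually_gt_atTop 0).mono fun z hz => div_ne_zero hs (sqrt_pos.2 hz).ne'⟩
  have h := (tendsto_cosh_sub_one_div_sq.comp ht).const_mul (s ^ 2)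
  rw [mul_one_div] at h
  refine h.congr' ((eventually_gt_atTop 0).mono fun z hz => ?_)
  simp only [Function.comp_apply, div_pow, sq_sqrt hz.le]
  field_simp

lemma Real.sq_div_two_le_mul_cosh_div_sqrt_sub_one {z : ℝ} (hz : 0 < z) (s : ℝ) :
    s ^ 2 / 2 ≤ z * (cosh (s / √z) - 1) := by
  have h := mul_le_mul_of_nonneg_left (one_add_sq_div_two_le_cosh (s / √z)) hz.le
  rw [div_pow, sq_sqrt hz.le] at h
  have : z * (s ^ 2 / z / 2) = s ^ 2 / 2 := by field_simp
  linarith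

noncomputable def scaledBesselK (ν z : ℝ) : ℝ := √(2 * z / π) * exp z * besselK ν z

noncomputable def scaledBesselKIntegrand (ν z s : ℝ) : ℝ :=
  exp (-(z * (cosh (s / √z) - 1))) * cosh (ν * (s / √z))

lemma sqrt_mul_exp_mul_besselK_eq_integral (ν : ℝ) {z : ℝ} (hz : 0 < z) :
    √z * exp z * besselK ν z = ∫ s in Ioi 0, scaledBesselKIntegrand ν z s := by
  set g : ℝ → ℝ := fun t => exp (-(z * (cosh t - 1))) * cosh (ν * t)
  have hsz : 0 < √z := sqrt_pos.2 hz
  have hK : exp z * besselK ν z = ∫ t in Ioi 0, g t := by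
    rw [besselK, ← integral_const_mul]
    refine setIntegral_congr_fun measurableSet_Ioi fun t _ => ?_
    simp only [g, ← mul_assoc, ← exp_add]
    ring_nf
  have hsub := integral_comp_mul_left_Ioi g 0 (inv_pos.2 hsz)
  simp only [mul_zero, inv_inv, smul_eq_mul, inv_mul_eq_div, g] at hsub
  rw [mul_assoc, hK, ← hsub]
  rfl

lemma norm_scaledBesselKIntegrand_le {ν z : ℝ} (hz : 0 < z) (hνz : 2 * ν ^ 2 ≤ z) (s : ℝ) :
    ‖scaledBesselKIntegrand ν z s‖ ≤ exp (-(1 / 4) * s ^ 2) := by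
  have hcosh : cosh (ν * (s / √z)) ≤ exp (s ^ 2 / 4) := by
    refine (cosh_le_exp_half_sq _).trans (exp_le_exp.2 ?_)
    rw [mul_pow, div_pow, sq_sqrt hz.le]
    rw [div_le_div_iff₀ two_pos four_pos, mul_div_assoc', div_mul_eq_mul_div,
      div_le_iff₀ hz]
    nlinarith [sq_nonneg s]
  rw [scaledBesselKIntegrand, Real.norm_of_nonneg (by positivity)]
  calc exp (-(z * (cosh (s / √z) - 1))) * cosh (ν * (s / √z))
      ≤ exp (-(s ^ 2 / 2)) * exp (s ^ 2 / 4) := by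
        gcongr
        exact sq_div_two_le_mul_cosh_div_sqrt_sub_one hz s
    _ = exp (-(1 / 4) * s ^ 2) := by rw [← exp_add]; ring_nf

lemma tendsto_scaledBesselKIntegrand (ν s : ℝ) :
    Tendsto (fun z => scaledBesselKIntegrand ν z s) atTop (𝓝 (exp (-(1 / 2) * s ^ 2))) := by
  have hcosh : Tendsto (fun z => cosh (ν * (s / √z))) atTop (𝓝 (cosh (ν * 0))) :=
    (continuous_cosh.tendsto _).comp
      ((tendsto_const_nhds.div_atTop tendsto_sqrt_atTop).const_mul ν)
  have h := (tendsto_mul_cosh_div_sqrt_sub_one s).neg.rexp.mul hcosh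
  rwa [mul_zero, cosh_zero, mul_one, show -(s ^ 2 / 2) = -(1 / 2) * s ^ 2 by ring] at h

theorem tendsto_scaledBesselK (ν : ℝ) : Tendsto (scaledBesselK ν) atTop (𝓝 1) := by
  have hlaguerre : Tendsto (fun z => ∫ s in Ioi 0, scaledBesselKIntegrand ν z s) atTop
      (𝓝 (∫ s in Ioi 0, exp (-(1 / 2) * s ^ 2))) := by
    refine tendsto_integral_filter_of_dominated_convergence (fun s => exp (-(1 / 4) * s ^ 2))
      (.of_forall fun z => ?_) ?_ (integrable_exp_neg_mul_sq (by norm_num)).integrableOn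
      (.of_forall fun s => tendsto_scaledBesselKIntegrand ν s)
    · exact (by unfold scaledBesselKIntegrand; fun_prop : Continuous _).aestronglyMeasurable
    · filter_upwards [eventually_gt_atTop 0, eventually_ge_atTop (2 * ν ^ 2)] with z hz hνz
      exact .of_forall (norm_scaledBesselKIntegrand_le hz hνz)
  have hval : √(2 / π) * ∫ s in Ioi 0, exp (-(1 / 2) * s ^ 2) = 1 := by
    rw [integral_gaussian_Ioi, ← mul_div_assoc, ← sqrt_mul (by positivity)]
    rw [show 2 / π * (π / (1 / 2)) = 2 ^ 2 by field_simp, sqrt_sq two_pos.le]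
    norm_num
  rw [← hval]
  refine (hlaguerre.const_mul _).congr' ((eventually_gt_atTop 0).mono fun z hz => ?_)
  rw [← sqrt_mul_exp_mul_besselK_eq_integral ν hz, scaledBesselK,
    show 2 * z / π = 2 / π * z by ring, sqrt_mul (by positivity)]
  ring

theorem IsCompact.tendstoUniformlyOn_of_forall_tendsto {ι α β : Type*} [TopologicalSpace α]
    [UniformSpace β] {F : ι → α → β} {f : α → β} {p : Filter ι} {K : Set α} (hK : IsCompact K)
    (hf : ContinuousOn f K)
    (h : ∀ x ∈ K, Tendsto (fun y : ι × α => F y.1 y.2) (p ×ˢ 𝓝[K] x) (𝓝 (f x))) :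
    TendstoUniformlyOn F f p K :=
  (tendstoLocallyUniformlyOn_iff_tendstoUniformlyOn_of_compact hK).mp <|
    tendstoLocallyUniformlyOn_iff_forall_tendsto.mpr fun x hx =>
      (((hf x hx).tendsto.comp tendsto_snd).prodMk_nhds (h x hx)).mono_right
        (nhds_le_uniformity _)

lemma sqrt_mul_exp_mul_rhoW_sq (ν : ℝ) {b x : ℝ} (hb : 0 < b) (hx : 0 < x) :
    √(4 * b / π) * exp (2 * b * x) * rhoW ν b (x ^ 2)
      = x ^ (ν - 1 / 2) * scaledBesselK ν (2 * b * x) := by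
  have hpow : (x ^ 2) ^ (ν / 2) = x ^ ν := by
    rw [← rpow_natCast, ← rpow_mul hx.le]; congr 1; push_cast; ring
  have hsqrt : √(4 * b / π) = √(2 * (2 * b * x) / π) / √x := by
    rw [← sqrt_div' _ hx.le]; congr 1; field_simp; ring
  rw [rhoW, hpow, sqrt_sq hx.le, hsqrt, rpow_sub hx, sqrt_eq_rpow x, scaledBesselK]
  ring

lemma normalized_Pmop_sq_eq (μ ν : ℝ) (n : ℕ) {a b x : ℝ} (ha : 0 < a) (hab : a < b)
    (hx : 0 < x) :
    √(4 * b / π) * exp (2 * b * x) *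
        (a ^ μ * b ^ ν * Gamma (μ + ν + 1 + n) * Nat.factorial n /
          (2 * (b ^ 2 - a ^ 2) ^ (μ + ν + 1))) * Pmop μ ν a b n (x ^ 2)
      = (-1) ^ n * ∑ j ∈ range (n + 1), n.choose j *
          (Gamma (μ + ν + 1 + n) / Gamma (μ + ν + 1 + j)) * ((a ^ 2 - b ^ 2) / b * x) ^ j *
          (x ^ (ν - 1 / 2) * scaledBesselK (ν + j) (2 * b * x)) := by
  have hb : 0 < b := ha.trans hab
  have hD : 0 < b ^ 2 - a ^ 2 := by nlinarith
  have hterm (j : ℕ) : √(4 * b / π) * exp (2 * b * x) * rhoW (ν + j) b (x ^ 2)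
      = x ^ j * (x ^ (ν - 1 / 2) * scaledBesselK (ν + j) (2 * b * x)) := by
    rw [sqrt_mul_exp_mul_rhoW_sq _ hb hx, show ν + j - 1 / 2 = j + (ν - 1 / 2) by ring,
      rpow_add hx, rpow_natCast, mul_assoc]
  rw [Pmop]
  set A := √(4 * b / π) * exp (2 * b * x)
  set N := a ^ μ * b ^ ν * Gamma (μ + ν + 1 + n) * Nat.factorial n /
    (2 * (b ^ 2 - a ^ 2) ^ (μ + ν + 1)) with hN
  set P := 2 * (b ^ 2 - a ^ 2) ^ (μ + ν + 1) / (a ^ μ * b ^ ν * Nat.factorial n) with hP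
  have hNP : N * P = Gamma (μ + ν + 1 + n) := by
    have := (rpow_pos_of_pos ha μ).ne'
    have := (rpow_pos_of_pos hb ν).ne'
    have := (rpow_pos_of_pos hD (μ + ν + 1)).ne'
    rw [hN, hP]
    field_simp
  rw [show ∀ S : ℝ, A * N * ((-1) ^ n * P * S) = (-1) ^ n * (N * P) * (A * S) from
    fun S => by ring, hNP, mul_assoc, mul_sum, mul_sum]
  refine congrArg _ (sum_congr rfl fun j _ => ?_)
  rw [mul_pow]
  linear_combination
    (n.choose j * (Gamma (μ + ν + 1 + n) / Gamma (μ + ν + 1 + j)) * ((a ^ 2 - b ^ 2) / b) ^ j) *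
      hterm j

lemma tendsto_sub_sq_sub_sq_div (c : ℝ) :
    Tendsto (fun b => ((b - c) ^ 2 - b ^ 2) / b) atTop (𝓝 (-(2 * c))) := by
  have h := (tendsto_const_nhds (x := c ^ 2)).div_atTop tendsto_id |>.sub_const (2 * c)
  rw [zero_sub] at h
  refine h.congr' ((eventually_ne_atTop 0).mono fun b hb => ?_)
  simp only [id]
  field_simp
  ring

lemma continuous_laguerreM (α : ℝ) (n : ℕ) : Continuous (laguerreM α n) := by
  unfold laguerreM; fun_prop

theorem Pmop_limit_large_b_general (μ ν c : ℝ) (hc : 0 < c)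
    (n : ℕ) :
    ∀ K : Set ℝ, IsCompact K → K ⊆ Set.Ioi 0 →
      TendstoUniformlyOn
        (fun (b : ℝ) (x : ℝ) =>
          Real.sqrt (4 * b / Real.pi) * Real.exp (2 * b * x) *
            ((b - c) ^ μ * b ^ ν * Real.Gamma (μ + ν + 1 + n) * Nat.factorial n /
              (2 * (b ^ 2 - (b - c) ^ 2) ^ (μ + ν + 1))) *
            Pmop μ ν (b - c) b n (x ^ 2))
        (fun x => x ^ (ν - 1 / 2) * laguerreM (μ + ν) n (2 * c * x)) atTop K := by
  intro K hK hK0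
  have hcont : ContinuousOn (fun x => x ^ (ν - 1 / 2) * laguerreM (μ + ν) n (2 * c * x)) K :=
    (continuousOn_id.rpow_const fun x hx => .inl (hK0 hx).ne').mul
      ((continuous_laguerreM _ n).comp (continuous_const.mul continuous_id)).continuousOn
  refine hK.tendstoUniformlyOn_of_forall_tendsto hcont fun x₀ hx₀ => ?_
  have hb : Tendsto (fun p : ℝ × ℝ => p.1) (atTop ×ˢ 𝓝[K] x₀) atTop := tendsto_fst
  have hx : Tendsto (fun p : ℝ × ℝ => p.2) (atTop ×ˢ 𝓝[K] x₀) (𝓝 x₀) :=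
    tendsto_snd.mono_right nhdsWithin_le_nhds
  have hφ (j : ℕ) : Tendsto
      (fun p : ℝ × ℝ => p.2 ^ (ν - 1 / 2) * scaledBesselK (ν + j) (2 * p.1 * p.2))
      (atTop ×ˢ 𝓝[K] x₀) (𝓝 (x₀ ^ (ν - 1 / 2))) := by
    simpa using (hx.rpow_const (.inl (hK0 hx₀).ne')).mul ((tendsto_scaledBesselK _).comp
      ((hb.const_mul_atTop two_pos).atTop_mul_pos (hK0 hx₀) hx))
  have hlaguerre : x₀ ^ (ν - 1 / 2) * laguerreM (μ + ν) n (2 * c * x₀)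
      = (-1) ^ n * ∑ j ∈ range (n + 1), n.choose j * (Gamma (μ + ν + 1 + n) /
          Gamma (μ + ν + 1 + j)) * (-(2 * c) * x₀) ^ j * x₀ ^ (ν - 1 / 2) := by
    simp only [laguerreM, mul_sum, neg_mul]
    exact sum_congr rfl fun j _ => by ring
  have hq : Tendsto (fun p : ℝ × ℝ => ((p.1 - c) ^ 2 - p.1 ^ 2) / p.1 * p.2)
      (atTop ×ˢ 𝓝[K] x₀) (𝓝 (-(2 * c) * x₀)) := ((tendsto_sub_sq_sub_sq_div c).comp hb).mul hx
  rw [hlaguerre]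
  refine Tendsto.congr' ?_ (tendsto_const_nhds.mul (tendsto_finsetSum _ fun j _ =>
    (tendsto_const_nhds.mul (hq.pow j)).mul (hφ j)))
  filter_upwards [prod_mem_prod (Ioi_mem_atTop c) self_mem_nhdsWithin] with ⟨b, x⟩ ⟨hcb, hxK⟩
  exact (normalized_Pmop_sq_eq μ ν n (sub_pos.2 hcb) (sub_lt_self b hc) (hK0 hxK)).symm

/-- limiting form of `P_n` as `b → +∞` with `b - a = c` fixed,
uniformly on compact subsets of `(0,∞)`. -/
theorem Pmop_limit_large_b (μ ν c : ℝ) (hμ : -1 < μ) (hν : 0 < ν) (hc : 0 < c)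
    (n : ℕ) (hn : 1 ≤ n) :
    ∀ K : Set ℝ, IsCompact K → K ⊆ Set.Ioi 0 →
      TendstoUniformlyOn
        (fun (b : ℝ) (x : ℝ) =>
          Real.sqrt (4 * b / Real.pi) * Real.exp (2 * b * x) *
            ((b - c) ^ μ * b ^ ν * Real.Gamma (μ + ν + 1 + n) * Nat.factorial n /
              (2 * (b ^ 2 - (b - c) ^ 2) ^ (μ + ν + 1))) *
            Pmop μ ν (b - c) b n (x ^ 2))
        (fun x => x ^ (ν - 1 / 2) * laguerreM (μ + ν) n (2 * c * x)) atTop K :=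
  Pmop_limit_large_b_general μ ν c hc n
end
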